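/- arXiv:2009.04928 — 6 statements merged into one kernel-verified Lean document; each statement's English description precedes it below -/
import Mathlib

section
/- If the subspaces of a finite-dimensional vector space arising from finitely many filtrations generate a distributive lattice (under intersection and sum), then the filtrations admit a common adapted basis. -/
variable {k V : Type*} [Field k] [AddCommGroup V] [Module k V]

/-- The sublattice of subspaces generated by a set `S` of subspaces, under
intersection (`⊓`) and sum (`⊔`). -/
inductive LatGen (S : Set (Submodule k V)) : Submodule k V → Prop
  | base {W : Submodule k V} : W ∈ S → LatGen S W
  | inf {W₁ W₂ : Submodule k V} : LatGen S W₁ → LatGen S W₂ → LatGen S (W₁ ⊓ W₂)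
  | sup {W₁ W₂ : Submodule k V} : LatGen S W₁ → LatGen S W₂ → LatGen S (W₁ ⊔ W₂)

/-!
Each filtration takes finitely many values, so the lattice is generated by a finite set, and
a finitely generated distributive lattice is finite. Its elements are then added one at a
time, each after all the elements below it. When `W` is added, the vectors `B` chosen so far
span the sum `P` of the elements already treated, and by distributivity `P ⊓ W` is the sum of
the `U ⊓ W`, all treated before `W`; hence `B ∩ W` spans `P ⊓ W`, and completing it by a basis
of a complement of `span (B ∩ W)` in `W` keeps `B` linearly independent.
-/

open Module Submodule Set

lemma latGen_iff_mem_latticeClosure {S : Set (Submodule k V)} {W : Submodule k V} :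
    LatGen S W ↔ W ∈ latticeClosure S := by
  refine ⟨fun hW => ?_, fun hW => latticeClosure_min (t := {W | LatGen S W})
    (fun _ => LatGen.base) ⟨fun _ h₁ _ h₂ => h₁.sup h₂, fun _ h₁ _ h₂ => h₁.inf h₂⟩ hW⟩
  induction hW with
  | base h => exact subset_latticeClosure h
  | inf _ _ ih₁ ih₂ => exact isSublattice_latticeClosure.infClosed ih₁ ih₂
  | sup _ _ ih₁ ih₂ => exact isSublattice_latticeClosure.supClosed ih₁ ih₂

section Lattice

variable {α : Type*} [Lattice α]

theorem finite_latticeClosure_of_distrib {s : Set α} (hs : s.Finite)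
    (hdist : ∀ a ∈ latticeClosure s, ∀ b ∈ latticeClosure s, ∀ c ∈ latticeClosure s,
      a ⊓ (b ⊔ c) = a ⊓ b ⊔ a ⊓ c) :
    (latticeClosure s).Finite := by
  let L : Sublattice α :=
    ⟨latticeClosure s, isSublattice_latticeClosure.supClosed, isSublattice_latticeClosure.infClosed⟩
  let _ : DistribLattice L := DistribLattice.ofInfSupLe fun a b c =>
    (Subtype.ext (hdist a a.2 b b.2 c c.2) : a ⊓ (b ⊔ c) = a ⊓ b ⊔ a ⊓ c).le
  have hval : Subtype.val '' latticeClosure (Subtype.val ⁻¹' s : Set L) = latticeClosure s := by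
    rw [image_latticeClosure _ _ (fun _ _ => rfl) (fun _ _ => rfl),
      image_preimage_eq_of_subset fun x hx => ⟨⟨x, subset_latticeClosure hx⟩, rfl⟩]
  rw [← hval]
  exact ((hs.preimage Subtype.val_injective.injOn).latticeClosure).image _

theorem Finset.sup_inf_distrib_left_of_mem [OrderBot α] {L : Set α} (hL : SupClosed L)
    (hdist : ∀ a ∈ L, ∀ b ∈ L, ∀ c ∈ L, a ⊓ (b ⊔ c) = a ⊓ b ⊔ a ⊓ c) {a : α} (ha : a ∈ L)
    {ι : Type*} (s : Finset ι) {f : ι → α} (hf : ∀ i ∈ s, f i ∈ L) :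
    a ⊓ s.sup f = s.sup fun i => a ⊓ f i := by
  induction s using Finset.cons_induction with
  | empty => simp
  | cons i s _ ih =>
    rw [Finset.forall_mem_cons] at hf
    rw [Finset.sup_cons, Finset.sup_cons, ← ih hf.2]
    rcases s.eq_empty_or_nonempty with rfl | hs
    · simp
    · exact hdist a ha _ hf.1 _ (hL.finsetSup_mem hs hf.2)

end Lattice

theorem Submodule.finite_of_isChain [FiniteDimensional k V] {s : Set (Submodule k V)}
    (hs : IsChain (· ≤ ·) s) : s.Finite := by
  refine Finite.of_finite_image (f := fun W : Submodule k V => finrank k W)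
    ((finite_Iic (finrank k V)).subset ?_) fun W₁ h₁ W₂ h₂ hfr => ?_
  · rintro _ ⟨W, -, rfl⟩
    exact W.finrank_le
  · rcases hs.total h₁ h₂ with h | h
    · exact eq_of_le_of_finrank_le h hfr.ge
    · exact (eq_of_le_of_finrank_le h hfr.le).symm

def IsAdaptedTo (B : Set V) (W : Submodule k V) : Prop :=
  span k (B ∩ W) = W

section Adapted

variable {B B' : Set V} {U W : Submodule k V}

lemma isAdaptedTo_iff_le : IsAdaptedTo B W ↔ W ≤ span k (B ∩ W) :=
  ⟨fun h => h.ge, le_antisymm (span_le.2 inter_subset_right)⟩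

lemma IsAdaptedTo.le_span_inter (h : IsAdaptedTo B U) (hBB' : B ⊆ B') (hUW : U ≤ W) :
    U ≤ span k (B' ∩ W) :=
  h.ge.trans (span_mono (inter_subset_inter hBB' hUW))

lemma IsAdaptedTo.mono (h : IsAdaptedTo B W) (hBB' : B ⊆ B') : IsAdaptedTo B' W :=
  isAdaptedTo_iff_le.2 (h.le_span_inter hBB' le_rfl)

theorem LinearIndepOn.exists_superset_isAdaptedTo (hB : LinearIndepOn k id B)
    (hBW : span k B ⊓ W ≤ span k (B ∩ W)) :
    ∃ B', B ⊆ B' ∧ LinearIndepOn k id B' ∧ span k B' = span k B ⊔ W ∧ IsAdaptedTo B' W := by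
  set D := span k (B ∩ W)
  have hDW : D ≤ W := span_le.2 inter_subset_right
  obtain ⟨E, hDE, hDEW⟩ := IsModularLattice.exists_disjoint_and_sup_eq hDW
  obtain ⟨C, hCE, hCspan, hC⟩ := exists_linearIndependent k (E : Set V)
  rw [span_eq] at hCspan
  have hEW : E ≤ W := hDEW ▸ le_sup_right
  refine ⟨B ∪ C, subset_union_left, hB.id_union hC ?_, ?_, ?_⟩
  · rw [hCspan, disjoint_iff_inf_le]
    calc span k B ⊓ E ≤ D ⊓ E := le_inf ((inf_le_inf_left _ hEW).trans hBW) inf_le_right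
      _ = ⊥ := hDE.eq_bot
  · have hDB : D ≤ span k B := span_mono inter_subset_left
    rw [span_union, hCspan, ← hDEW, ← sup_assoc, sup_eq_left.2 hDB]
  · rw [isAdaptedTo_iff_le]
    calc W = D ⊔ E := hDEW.symm
      _ ≤ span k ((B ∪ C) ∩ W) := sup_le (span_mono (inter_subset_inter_left _ subset_union_left))
          (hCspan ▸ span_mono fun x hx => ⟨Or.inr hx, hEW (hCE hx)⟩)

end Adapted

section Distrib

variable {L : Set (Submodule k V)} (hL : IsSublattice L)
  (hdist : ∀ a ∈ L, ∀ b ∈ L, ∀ c ∈ L, a ⊓ (b ⊔ c) = a ⊓ b ⊔ a ⊓ c)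
include hL hdist

theorem exists_linearIndepOn_isAdaptedTo_of_lower (D : Finset (Submodule k V)) (hDL : ↑D ⊆ L)
    (hlower : ∀ u ∈ L, ∀ d ∈ D, u ≤ d → u ∈ D) :
    ∃ B : Set V, LinearIndepOn k id B ∧ span k B = D.sup id ∧ ∀ W ∈ D, IsAdaptedTo B W := by
  classical
  induction D using Finset.strongInduction with
  | H D ih =>
  rcases D.eq_empty_or_nonempty with rfl | hne
  · exact ⟨∅, linearIndepOn_empty k id, by simp, by simp⟩
  obtain ⟨w, hw⟩ := D.exists_maximal hne
  have hlower' : ∀ u ∈ L, ∀ d ∈ D.erase w, u ≤ d → u ∈ D.erase w := by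
    intro u hu d hd hud
    refine Finset.mem_erase.2 ⟨?_, hlower u hu d (Finset.mem_of_mem_erase hd) hud⟩
    rintro rfl
    exact (Finset.mem_erase.1 hd).1 (le_antisymm (hw.2 (Finset.mem_of_mem_erase hd) hud) hud)
  obtain ⟨B, hB, hBspan, hBadapted⟩ :=
    ih _ (Finset.erase_ssubset hw.1)
      ((Finset.coe_subset.2 (Finset.erase_subset _ _)).trans hDL) hlower'
  have hwL : w ∈ L := hDL hw.1
  have key : span k B ⊓ w ≤ span k (B ∩ w) := by
    rw [hBspan, inf_comm, Finset.sup_inf_distrib_left_of_mem hL.supClosed hdist hwL _ (f := id)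
      fun u hu => hDL (Finset.mem_of_mem_erase hu)]
    refine Finset.sup_le fun u hu => ?_
    have huw : w ⊓ u ∈ D.erase w :=
      hlower' _ (hL.infClosed hwL (hDL (Finset.mem_of_mem_erase hu))) u hu inf_le_right
    exact (hBadapted _ huw).le_span_inter subset_rfl inf_le_left
  obtain ⟨B', hBB', hB', hB'span, hB'w⟩ := hB.exists_superset_isAdaptedTo key
  refine ⟨B', hB', ?_, fun W hW => ?_⟩
  · conv_rhs => rw [← Finset.insert_erase hw.1, Finset.sup_insert]
    rw [hB'span, hBspan, sup_comm, id]
  · by_cases h : W = w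
    · exact h ▸ hB'w
    · exact (hBadapted W (Finset.mem_erase.2 ⟨h, hW⟩)).mono hBB'

theorem exists_adapted_basis_of_finite_distrib (hfin : L.Finite) :
    ∃ B : Set V, LinearIndepOn k id B ∧ span k B = ⊤ ∧ ∀ W ∈ L, IsAdaptedTo B W := by
  obtain ⟨B, hB, -, hadapted⟩ := exists_linearIndepOn_isAdaptedTo_of_lower hL hdist hfin.toFinset
    (by simp) fun u hu _ _ _ => hfin.mem_toFinset.2 hu
  refine ⟨hB.extend (subset_univ B), hB.linearIndepOn_extend _, ?_, fun W hW => ?_⟩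
  · rw [hB.span_extend_eq_span, span_univ]
  · exact (hadapted W (hfin.mem_toFinset.2 hW)).mono (hB.subset_extend _)

end Distrib

/-- if the subspaces of a finite-dimensional vector space arising
from finitely many (decreasing) filtrations generate a distributive lattice
under intersection and sum, then the filtrations admit a common adapted basis:
a basis `B` of `V` such that `B ∩ W` spans `W` for every subspace `W` in the
generated lattice. -/
theorem common_adapted_basis_of_distrib [FiniteDimensional k V]
    (l : ℕ) (F : Fin l → ℚ → Submodule k V)
    (hanti : ∀ i, Antitone (F i))
    (hdistrib : ∀ a b c : Submodule k V,
      LatGen {W | ∃ i r, W = F i r} a →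
      LatGen {W | ∃ i r, W = F i r} b →
      LatGen {W | ∃ i r, W = F i r} c →
      a ⊓ (b ⊔ c) = (a ⊓ b) ⊔ (a ⊓ c)) :
    ∃ B : Set V, LinearIndependent k ((↑) : B → V) ∧ Submodule.span k B = ⊤ ∧
      ∀ W : Submodule k V, LatGen {W' | ∃ i r, W' = F i r} W →
        Submodule.span k (B ∩ (W : Set V)) = W := by
  set S : Set (Submodule k V) := {W | ∃ i r, W = F i r}
  simp only [latGen_iff_mem_latticeClosure] at hdistrib ⊢
  have hS : S.Finite := by
    have hS_eq : S = ⋃ i, range (F i) := by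
      ext W
      simp [S, eq_comm]
    rw [hS_eq]
    exact finite_iUnion fun i => finite_of_isChain (hanti i).isChain_range
  have hdist : ∀ a ∈ latticeClosure S, ∀ b ∈ latticeClosure S, ∀ c ∈ latticeClosure S,
      a ⊓ (b ⊔ c) = a ⊓ b ⊔ a ⊓ c := fun a ha b hb c hc => hdistrib a b c ha hb hc
  exact exists_adapted_basis_of_finite_distrib isSublattice_latticeClosure hdist
    (finite_latticeClosure_of_distrib hS hdist)
end

section
/- Let F and G be filtrations on an algebra R sharing a common adapted basis B. Then for any b ∈ B, the quasivaluation of the sum filtration satisfies v_{F⊕G}(b) = v_F(b) + v_G(b), where (F⊕G)_r = Σ_{r₁+r₂=r} F_{r₁} ∩ G_{r₂}. -/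
variable {k R : Type*} [Field k] [CommRing R] [Algebra k R]

/-- The sum `F ⊕ G` of two filtrations:
`(F ⊕ G)_r = Σ_{r₁ + r₂ = r} F_{r₁} ∩ G_{r₂}`. -/
noncomputable def filtSum (F G : ℚ → Submodule k R) : ℚ → Submodule k R :=
  fun r => ⨆ p : {p : ℚ × ℚ // p.1 + p.2 = r}, (F p.1.1 ⊓ G p.1.2)

/-!
If `b` had value `> r + s` in `F ⊕ G`, then `b` would lie in a sum of pieces `F_{r₁} ∩ G_{r₂}`
with `r₁ + r₂ > r + s`, so `r₁ > r` or `r₂ > s`. Each such piece sits inside `F_{r₁}` or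
`G_{r₂}`, which, being spanned by basis vectors and not containing `b`, is spanned by `B \ {b}`.
Linear independence of `B` forbids `b ∈ span (B \ {b})`.
-/

theorem Submodule.le_span_diff_singleton {S M : Type*} [Semiring S] [AddCommMonoid M]
    [Module S M] {B : Set M} {N : Submodule S M} (hN : span S (B ∩ N) = N) {b : M} (hbN : b ∉ N) :
    N ≤ span S (B \ {b}) := by
  rw [← hN]
  refine span_mono fun x ⟨hxB, hxN⟩ => ⟨hxB, ?_⟩
  rintro rfl
  exact hbN hxN

theorem mem_filtSum_add {F G : ℚ → Submodule k R} {r s : ℚ} {x : R} (hF : x ∈ F r)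
    (hG : x ∈ G s) : x ∈ filtSum F G (r + s) :=
  le_iSup (fun p : {p : ℚ × ℚ // p.1 + p.2 = r + s} => F p.1.1 ⊓ G p.1.2) ⟨(r, s), rfl⟩ ⟨hF, hG⟩

theorem filtSum_le {F G : ℚ → Submodule k R} {t : ℚ} {N : Submodule k R}
    (h : ∀ r s, r + s = t → F r ⊓ G s ≤ N) : filtSum F G t ≤ N :=
  iSup_le fun p => h p.1.1 p.1.2 p.2

theorem filtSum_quasival_add_general
    (F G : ℚ → Submodule k R)
    (B : Set R)
    (hind : LinearIndependent k ((↑) : B → R))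
    (hFadapt : ∀ r, Submodule.span k (B ∩ (F r : Set R)) = F r)
    (hGadapt : ∀ r, Submodule.span k (B ∩ (G r : Set R)) = G r)
    (b : R) (hb : b ∈ B) (r s : ℚ)
    (hbF : b ∈ F r ∧ ∀ r', r < r' → b ∉ F r')
    (hbG : b ∈ G s ∧ ∀ s', s < s' → b ∉ G s') :
    b ∈ filtSum F G (r + s) ∧ ∀ t, r + s < t → b ∉ filtSum F G t := by
  refine ⟨mem_filtSum_add hbF.1 hbG.1, fun t ht hbt => ?_⟩
  have hle : filtSum F G t ≤ Submodule.span k (B \ {b}) := filtSum_le fun r' s' hrs => by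
    rcases lt_or_ge r r' with hr | hr
    · exact inf_le_left.trans <| Submodule.le_span_diff_singleton (hFadapt r') (hbF.2 r' hr)
    · exact inf_le_right.trans <|
        Submodule.le_span_diff_singleton (hGadapt s') (hbG.2 s' (by linarith))
  have hnot : b ∉ Submodule.span k (B \ {b}) := by
    simpa using LinearIndepOn.notMem_span (v := id) hind hb
  exact hnot (hle hbt)

/-- let `F` and `G` be (decreasing) filtrations on an algebra `R`
sharing a common adapted basis `B`.  For `b ∈ B`, the quasivaluation of a
filtration is `v_F(b) = max {r : b ∈ F_r}`; here the statement
`v_F(b) = r` is rendered as `b ∈ F r ∧ ∀ r' > r, b ∉ F r'`.  Then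
`v_{F⊕G}(b) = v_F(b) + v_G(b)`. -/
theorem filtSum_quasival_add
    (F G : ℚ → Submodule k R)
    (hFanti : Antitone F) (hGanti : Antitone G)
    (B : Set R)
    (hind : LinearIndependent k ((↑) : B → R))
    (hspan : Submodule.span k B = ⊤)
    (hFadapt : ∀ r, Submodule.span k (B ∩ (F r : Set R)) = F r)
    (hGadapt : ∀ r, Submodule.span k (B ∩ (G r : Set R)) = G r)
    (b : R) (hb : b ∈ B) (r s : ℚ)
    (hbF : b ∈ F r ∧ ∀ r', r < r' → b ∉ F r')
    (hbG : b ∈ G s ∧ ∀ s', s < s' → b ∉ G s') :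
    b ∈ filtSum F G (r + s) ∧ ∀ t, r + s < t → b ∉ filtSum F G t :=
  filtSum_quasival_add_general F G B hind hFadapt hGadapt b hb r s hbF hbG
end

section
/- Let F¹, F², F³ be filtrations on R sharing a common adapted basis. Then the operation ⊕ on these filtrations is associative: (F¹ ⊕ F²) ⊕ F³ = F¹ ⊕ (F² ⊕ F³). -/
/-!
A common adapted basis `B` identifies each filtration `F` with the filtration
`r ↦ B ∩ F r` of the frame `Set B`, through `s ↦ span s`. This map preserves `⨆`, and by
linear independence also `⊓`, so it carries the same sum formula on `Set B` to `⊕`. In a frame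
`⊓` distributes over `⨆`, and both bracketings of the sum become the supremum of
`F¹ a ⊓ F² b ⊓ F³ c` over all `a + b + c = r`.
-/

variable {k R : Type*} [Field k] [CommRing R] [Algebra k R]

def supInfConv {α : Type*} [CompleteLattice α] (f g : ℚ → α) (r : ℚ) : α :=
  ⨆ p : {p : ℚ × ℚ // p.1 + p.2 = r}, f p.1.1 ⊓ g p.1.2

theorem supInfConv_assoc {α : Type*} [Order.Frame α] (f g h : ℚ → α) :
    supInfConv (supInfConv f g) h = supInfConv f (supInfConv g h) := by
  funext r
  simp only [supInfConv, iSup_inf_eq, inf_iSup_eq]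
  apply le_antisymm
  · refine iSup₂_le fun ⟨⟨ab, c⟩, habc⟩ ⟨⟨a, b⟩, hab⟩ => ?_
    refine le_iSup₂_of_le ⟨⟨a, b + c⟩, by dsimp only at *; linarith⟩ ⟨⟨b, c⟩, rfl⟩ ?_
    rw [inf_assoc]
  · refine iSup₂_le fun ⟨⟨a, bc⟩, habc⟩ ⟨⟨b, c⟩, hbc⟩ => ?_
    refine le_iSup₂_of_le ⟨⟨a + b, c⟩, by dsimp only at *; linarith⟩ ⟨⟨a, b⟩, rfl⟩ ?_
    rw [inf_assoc]

theorem LinearIndependent.span_image_inter {ι S M : Type*} [Semiring S] [AddCommMonoid M]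
    [Module S M] {v : ι → M} (hv : LinearIndependent S v) (s t : Set ι) :
    Submodule.span S (v '' (s ∩ t)) = Submodule.span S (v '' s) ⊓ Submodule.span S (v '' t) := by
  simp only [Finsupp.span_image_eq_map_linearCombination, Finsupp.supported_inter]
  exact Submodule.map_inf _ hv

theorem filtSum_span_image {ι : Type*} {v : ι → R} (hv : LinearIndependent k v)
    (s t : ℚ → Set ι) :
    filtSum (fun r => Submodule.span k (v '' s r)) (fun r => Submodule.span k (v '' t r)) =
      fun r => Submodule.span k (v '' supInfConv s t r) := by
  funext r
  simp only [filtSum, supInfConv, Set.iSup_eq_iUnion, Set.inf_eq_inter, Set.image_iUnion,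
    Submodule.span_iUnion, hv.span_image_inter]

theorem eq_span_image_preimage_of_adapted {B : Set R} {F : ℚ → Submodule k R}
    (hadapt : ∀ r, Submodule.span k (B ∩ (F r : Set R)) = F r) :
    F = fun r => Submodule.span k (((↑) : B → R) '' ((↑) ⁻¹' (F r : Set R))) := by
  funext r
  rw [Subtype.image_preimage_coe, hadapt]

theorem filtSum_assoc_general
    (F₁ F₂ F₃ : ℚ → Submodule k R)
    (B : Set R)
    (hind : LinearIndependent k ((↑) : B → R))
    (hadapt₁ : ∀ r, Submodule.span k (B ∩ (F₁ r : Set R)) = F₁ r)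
    (hadapt₂ : ∀ r, Submodule.span k (B ∩ (F₂ r : Set R)) = F₂ r)
    (hadapt₃ : ∀ r, Submodule.span k (B ∩ (F₃ r : Set R)) = F₃ r) :
    ∀ r : ℚ, filtSum (filtSum F₁ F₂) F₃ r = filtSum F₁ (filtSum F₂ F₃) r := by
  rw [← funext_iff, eq_span_image_preimage_of_adapted hadapt₁,
    eq_span_image_preimage_of_adapted hadapt₂, eq_span_image_preimage_of_adapted hadapt₃]
  simp only [filtSum_span_image hind, supInfConv_assoc]

/-- let `F¹, F², F³` be (decreasing) filtrations on `R` sharing a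
common adapted basis `B`.  Then the operation `⊕` on these filtrations is
associative: `(F¹ ⊕ F²) ⊕ F³ = F¹ ⊕ (F² ⊕ F³)`. -/
theorem filtSum_assoc
    (F₁ F₂ F₃ : ℚ → Submodule k R)
    (h₁ : Antitone F₁) (h₂ : Antitone F₂) (h₃ : Antitone F₃)
    (B : Set R)
    (hind : LinearIndependent k ((↑) : B → R))
    (hspan : Submodule.span k B = ⊤)
    (hadapt₁ : ∀ r, Submodule.span k (B ∩ (F₁ r : Set R)) = F₁ r)
    (hadapt₂ : ∀ r, Submodule.span k (B ∩ (F₂ r : Set R)) = F₂ r)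
    (hadapt₃ : ∀ r, Submodule.span k (B ∩ (F₃ r : Set R)) = F₃ r) :
    ∀ r : ℚ, filtSum (filtSum F₁ F₂) F₃ r = filtSum F₁ (filtSum F₂ F₃) r :=
  filtSum_assoc_general F₁ F₂ F₃ B hind hadapt₁ hadapt₂ hadapt₃
end

section
/- Let R be a commutative ring, J ⊂ R an ideal generated by a regular sequence, with R/J a domain. If R is graded with trivial intersection ⋂_n Jⁿ = 0, then R itself is a domain. -/
/-!
Write `J = (y₁, …, y_k)`. Every element of `J ^ d` is the value at `y` of a form of degree `d`, and
regularity of the sequence makes the sequence quasi-regular: a form of degree `d` whose value lies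
in `J ^ (d + 1)` has all its coefficients in `J`, i.e. `gr_J R ≅ (R ⧸ J)[t₁, …, t_k]`. This is
proved by adjoining the generators one at a time, splitting a form as `t_a H + G` with `G` free of
`t_a` and using that `y_a` is a non-zero-divisor modulo the earlier generators.

Since `⋂ J ^ n = 0`, a nonzero `a` has an exact order `m` (`a ∈ J ^ m \ J ^ (m + 1)`). If `a`, `b`
have orders `m`, `n` and `a b = 0`, lift them to forms `F`, `G`; quasi-regularity puts the
coefficients of `F G` in `J`, so the reductions of `F` and `G` to the domain `(R ⧸ J)[t]` have
product zero. One of them vanishes, which puts `a` in `J ^ (m + 1)` or `b` in `J ^ (n + 1)`.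
-/

open MvPolynomial RingTheory.Sequence

namespace MvPolynomial

variable {σ R : Type*} [CommRing R]

section Supported

variable {s : Set σ}

theorem mem_supported_iff_support_subset {F : MvPolynomial σ R} :
    F ∈ supported R s ↔ ∀ m ∈ F.support, ↑m.support ⊆ s := by
  classical
  rw [mem_supported]
  constructor
  · exact fun h m hm i hi => h ((mem_vars_iff_mem_support i).mpr ⟨m, hm, hi⟩)
  · intro h i hi
    obtain ⟨m, hm, hi⟩ := (mem_vars_iff_mem_support i).mp hi
    exact h m hm hi

theorem IsHomogeneous.modMonomial {d : ℕ} {F : MvPolynomial σ R} (hF : F.IsHomogeneous d)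
    (n : σ →₀ ℕ) : (F.modMonomial n).IsHomogeneous d := by
  intro m hm
  by_cases hn : n ≤ m
  · exact absurd (coeff_modMonomial_of_le F hn) hm
  · exact hF (by rwa [coeff_modMonomial_of_not_le F hn] at hm)

theorem IsHomogeneous.divMonomial {d : ℕ} {F : MvPolynomial σ R} {n : σ →₀ ℕ}
    (hF : F.IsHomogeneous (n.degree + d)) : (F.divMonomial n).IsHomogeneous d := by
  intro m hm
  have := hF hm
  simp only [Pi.one_def, ← Finsupp.degree_eq_weight_one, map_add] at this ⊢
  omega

theorem divMonomial_mem_supported {F : MvPolynomial σ R} (hF : F ∈ supported R s)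
    (n : σ →₀ ℕ) : F.divMonomial n ∈ supported R s := by
  rw [mem_supported_iff_support_subset] at hF ⊢
  intro m hm i hi
  rw [mem_support_iff, coeff_divMonomial, ← mem_support_iff] at hm
  refine hF (n + m) hm ?_
  simp only [Finset.mem_coe, Finsupp.mem_support_iff, Finsupp.add_apply] at hi ⊢
  omega

theorem modMonomial_single_mem_supported {a : σ} {F : MvPolynomial σ R}
    (hF : F ∈ supported R (insert a s)) : F.modMonomial (Finsupp.single a 1) ∈ supported R s := by
  classical
  rw [mem_supported_iff_support_subset] at hF ⊢
  intro m hm i hi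
  have ha : ¬ Finsupp.single a 1 ≤ m := fun h => by
    rw [mem_support_iff, coeff_modMonomial_of_le F h] at hm
    exact hm rfl
  rw [mem_support_iff, coeff_modMonomial_of_not_le F ha, ← mem_support_iff] at hm
  refine (hF m hm hi).resolve_left fun hia => ha ?_
  subst hia
  simpa [Finsupp.single_le_iff, Nat.one_le_iff_ne_zero] using hi

end Supported

section Evaluation

variable (y : σ → R) (s : Set σ)

theorem eval_mem_mul_span_pow {K : Ideal R} {d : ℕ} {F : MvPolynomial σ R}
    (hF : F.IsHomogeneous d) (hFs : F ∈ supported R s) (hK : ∀ m, F.coeff m ∈ K) :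
    eval y F ∈ K * Ideal.span (y '' s) ^ d := by
  rw [eval_eq]
  refine Ideal.sum_mem _ fun m hm => Ideal.mul_mem_mul (hK m) ?_
  rw [hF.degree_eq_sum_deg_support hm, ← Finset.prod_pow_eq_pow_sum]
  exact Ideal.prod_mem_prod fun i hi => Ideal.pow_mem_pow
    (Ideal.subset_span (Set.mem_image_of_mem y (mem_supported_iff_support_subset.mp hFs m hm hi))) _

theorem exists_isHomogeneous_of_mem_span {a : R} (ha : a ∈ Ideal.span (y '' s)) :
    ∃ F : MvPolynomial σ R, F.IsHomogeneous 1 ∧ F ∈ supported R s ∧ eval y F = a := by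
  induction ha using Submodule.span_induction with
  | mem x hx =>
    obtain ⟨i, hi, rfl⟩ := hx
    exact ⟨X i, isHomogeneous_X R i, Algebra.subset_adjoin ⟨i, hi, rfl⟩, eval_X _⟩
  | zero => exact ⟨0, isHomogeneous_zero _ _ _, Subalgebra.zero_mem _, map_zero _⟩
  | add x z _ _ hx hz =>
    obtain ⟨F, hF, hFs, rfl⟩ := hx
    obtain ⟨G, hG, hGs, rfl⟩ := hz
    exact ⟨F + G, hF.add hG, add_mem hFs hGs, map_add _ _ _⟩
  | smul r x _ hx =>
    obtain ⟨F, hF, hFs, rfl⟩ := hx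
    exact ⟨C r * F, by simpa using hF.C_mul r, mul_mem (Subalgebra.algebraMap_mem _ r) hFs,
      by simp⟩

theorem exists_isHomogeneous_of_mem_span_pow {d : ℕ} {a : R}
    (ha : a ∈ Ideal.span (y '' s) ^ d) :
    ∃ F : MvPolynomial σ R, F.IsHomogeneous d ∧ F ∈ supported R s ∧ eval y F = a := by
  induction ha using Submodule.pow_induction_on_right' with
  | algebraMap r => exact ⟨C r, isHomogeneous_C _ r, Subalgebra.algebraMap_mem _ r, eval_C r⟩
  | add x z i _ _ hx hz =>
    obtain ⟨F, hF, hFs, rfl⟩ := hx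
    obtain ⟨G, hG, hGs, rfl⟩ := hz
    exact ⟨F + G, hF.add hG, add_mem hFs hGs, map_add _ _ _⟩
  | mul_mem i x _ hx a ha =>
    obtain ⟨F, hF, hFs, rfl⟩ := hx
    obtain ⟨G, hG, hGs, rfl⟩ := exists_isHomogeneous_of_mem_span y s ha
    exact ⟨F * G, hF.mul hG, mul_mem hFs hGs, map_mul _ _ _⟩

theorem exists_isHomogeneous_of_mem_mul_span_pow {K : Ideal R} {d : ℕ} {a : R}
    (ha : a ∈ K * Ideal.span (y '' s) ^ d) :
    ∃ F : MvPolynomial σ R, F.IsHomogeneous d ∧ F ∈ supported R s ∧ (∀ m, F.coeff m ∈ K) ∧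
      eval y F = a := by
  refine Submodule.mul_induction_on ha (fun c hc x hx => ?_) fun x z hx hz => ?_
  · obtain ⟨F, hF, hFs, rfl⟩ := exists_isHomogeneous_of_mem_span_pow y s hx
    exact ⟨C c * F, by simpa using hF.C_mul c, mul_mem (Subalgebra.algebraMap_mem _ c) hFs,
      fun m => by simpa only [coeff_C_mul] using K.mul_mem_right _ hc, by simp⟩
  · obtain ⟨F, hF, hFs, hFK, rfl⟩ := hx
    obtain ⟨G, hG, hGs, hGK, rfl⟩ := hz
    exact ⟨F + G, hF.add hG, add_mem hFs hGs, fun m => by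
      simpa only [coeff_add] using K.add_mem (hFK m) (hGK m), map_add _ _ _⟩

end Evaluation

end MvPolynomial

section QuasiRegular

variable {σ R : Type*} [CommRing R] {y : σ → R} {s : Set σ}

/-- With `I` the ideal spanned by `y '' s`, this says `gr_I R ≅ (R ⧸ I)[t_i : i ∈ s]`. -/
def IsQuasiRegularOn (y : σ → R) (s : Set σ) : Prop :=
  ∀ (d : ℕ) (F : MvPolynomial σ R), F.IsHomogeneous d → F ∈ supported R s →
    eval y F ∈ Ideal.span (y '' s) ^ (d + 1) → ∀ m, F.coeff m ∈ Ideal.span (y '' s)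

theorem coeff_mem_span_of_eval_mem_pow_succ {d : ℕ}
    (hker : ∀ G : MvPolynomial σ R, G.IsHomogeneous d → G ∈ supported R s → eval y G = 0 →
      ∀ m, G.coeff m ∈ Ideal.span (y '' s))
    {F : MvPolynomial σ R} (hF : F.IsHomogeneous d) (hFs : F ∈ supported R s)
    (hFy : eval y F ∈ Ideal.span (y '' s) ^ (d + 1)) (m : σ →₀ ℕ) :
    F.coeff m ∈ Ideal.span (y '' s) := by
  rw [pow_succ'] at hFy
  obtain ⟨G, hG, hGs, hGI, hGy⟩ := exists_isHomogeneous_of_mem_mul_span_pow y s hFy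
  have := hker (F - G) (hF.sub hG) (sub_mem hFs hGs) (by rw [map_sub, hGy, sub_self])
  simpa using add_mem (this m) (hGI m)

theorem IsQuasiRegularOn.mem_pow_of_mul_mem_pow (h : IsQuasiRegularOn y s) {x : R}
    (hx : ∀ r, x * r ∈ Ideal.span (y '' s) → r ∈ Ideal.span (y '' s)) {r : R} :
    ∀ {e : ℕ}, x * r ∈ Ideal.span (y '' s) ^ e → r ∈ Ideal.span (y '' s) ^ e
  | 0, _ => by simp
  | e + 1, hxr => by
    obtain ⟨F, hF, hFs, rfl⟩ := exists_isHomogeneous_of_mem_span_pow y s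
      (h.mem_pow_of_mul_mem_pow hx (Ideal.pow_le_pow_right e.le_succ hxr))
    have hxF := h e (C x * F) (by simpa using hF.C_mul x)
      (mul_mem (Subalgebra.algebraMap_mem _ x) hFs) (by simpa using hxr)
    rw [pow_succ']
    exact eval_mem_mul_span_pow y s hF hFs fun m => hx _ (by simpa [coeff_C_mul] using hxF m)

theorem isQuasiRegularOn_empty : IsQuasiRegularOn y ∅ := by
  intro d F _ hF hFy m
  rw [supported_empty, Algebra.mem_bot] at hF
  obtain ⟨c, rfl⟩ := hF
  simp_all

theorem IsQuasiRegularOn.coeff_mem_span_insert_of_eval_eq_zero (h : IsQuasiRegularOn y s)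
    {a : σ} (ha : ∀ r, y a * r ∈ Ideal.span (y '' s) → r ∈ Ideal.span (y '' s)) {e : ℕ}
    (ih : ∀ H : MvPolynomial σ R, H.IsHomogeneous e → H ∈ supported R (insert a s) →
      eval y H = 0 → ∀ m, H.coeff m ∈ Ideal.span (y '' insert a s))
    {F : MvPolynomial σ R} (hF : F.IsHomogeneous (e + 1)) (hFs : F ∈ supported R (insert a s))
    (hFy : eval y F = 0) (m : σ →₀ ℕ) : F.coeff m ∈ Ideal.span (y '' insert a s) := by
  classical
  set I := Ideal.span (y '' s)
  set I' := Ideal.span (y '' insert a s)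
  have hII' : I ≤ I' := Ideal.span_mono (Set.image_mono (Set.subset_insert a s))
  set H := F.divMonomial (Finsupp.single a 1)
  set G := F.modMonomial (Finsupp.single a 1)
  have hH : H.IsHomogeneous e :=
    IsHomogeneous.divMonomial (by rwa [Finsupp.degree_single, add_comm])
  have hG : G.IsHomogeneous (e + 1) := hF.modMonomial _
  have hGs : G ∈ supported R s := modMonomial_single_mem_supported hFs
  have hFHG : y a * eval y H + eval y G = 0 := by
    rw [← hFy, ← divMonomial_add_modMonomial_single F a]
    simp only [H, G, map_add, map_mul, eval_X]
  have hGy : eval y G ∈ I ^ (e + 1) := by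
    simpa using eval_mem_mul_span_pow y s (K := ⊤) hG hGs fun _ => trivial
  have hHy : eval y H ∈ I ^ (e + 1) := h.mem_pow_of_mul_mem_pow ha (by
    rw [eq_neg_of_add_eq_zero_left hFHG]
    exact neg_mem hGy)
  have hHI' : ∀ n, H.coeff n ∈ I' := coeff_mem_span_of_eval_mem_pow_succ ih hH
    (divMonomial_mem_supported hFs _) (Ideal.pow_right_mono hII' _ hHy)
  -- Lifting `H(y) ∈ I ^ (e + 1)` to a form `K` in the old variables, `G + y_a K` is a form in
  -- the old variables vanishing at `y`, so `G ≡ -y_a K ≡ 0` modulo `I'`.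
  obtain ⟨K, hK, hKs, hKy⟩ := exists_isHomogeneous_of_mem_span_pow y s hHy
  have hGK := h (e + 1) (G + C (y a) * K) (hG.add (by simpa using hK.C_mul (y a)))
    (add_mem hGs (mul_mem (Subalgebra.algebraMap_mem _ _) hKs))
    (by rw [map_add, map_mul, eval_C, hKy, add_comm (eval y G), hFHG]; exact zero_mem _)
  have hGI' : ∀ n, G.coeff n ∈ I' := fun n => by
    have := sub_mem (hII' (hGK n))
      (I'.mul_mem_right (K.coeff n) (Ideal.subset_span ⟨a, Set.mem_insert a s, rfl⟩))
    rwa [coeff_add, coeff_C_mul, add_sub_cancel_right] at this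
  rw [← divMonomial_add_modMonomial_single F a, coeff_add, coeff_X_mul']
  split_ifs
  · exact add_mem (hHI' _) (hGI' m)
  · exact add_mem (zero_mem _) (hGI' m)

theorem IsQuasiRegularOn.insert_of_mul_mem (h : IsQuasiRegularOn y s) {a : σ}
    (ha : ∀ r, y a * r ∈ Ideal.span (y '' s) → r ∈ Ideal.span (y '' s)) :
    IsQuasiRegularOn y (insert a s) := by
  suffices hker : ∀ (d : ℕ) (F : MvPolynomial σ R), F.IsHomogeneous d →
      F ∈ supported R (insert a s) → eval y F = 0 →
      ∀ m, F.coeff m ∈ Ideal.span (y '' insert a s) from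
    fun d F hF hFs hFy => coeff_mem_span_of_eval_mem_pow_succ (hker d) hF hFs hFy
  intro d
  induction d with
  | zero =>
    classical
    intro F hF _ hFy m
    rw [← totalDegree_zero_iff_isHomogeneous, totalDegree_eq_zero_iff_eq_C] at hF
    rw [hF, eval_C] at hFy
    rw [hF, coeff_C, hFy, ite_self]
    exact zero_mem _
  | succ e ih => exact fun F => h.coeff_mem_span_insert_of_eval_eq_zero ha ih

variable [IsDomain (R ⧸ Ideal.span (y '' s))]

theorem IsQuasiRegularOn.mul_notMem_pow (h : IsQuasiRegularOn y s) {a b : R} {m n : ℕ}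
    (ha : a ∈ Ideal.span (y '' s) ^ m) (ha' : a ∉ Ideal.span (y '' s) ^ (m + 1))
    (hb : b ∈ Ideal.span (y '' s) ^ n) (hb' : b ∉ Ideal.span (y '' s) ^ (n + 1)) :
    a * b ∉ Ideal.span (y '' s) ^ (m + n + 1) := by
  set I := Ideal.span (y '' s)
  have eval_mem_of_map_eq_zero : ∀ {d : ℕ} {P : MvPolynomial σ R}, P.IsHomogeneous d →
      P ∈ supported R s → map (Ideal.Quotient.mk I) P = 0 → eval y P ∈ I ^ (d + 1) :=
    fun hP hPs hP0 => by
      rw [pow_succ']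
      refine eval_mem_mul_span_pow y s hP hPs fun c => Ideal.Quotient.eq_zero_iff_mem.mp ?_
      simpa only [coeff_map, coeff_zero] using congrArg (coeff c) hP0
  intro hab
  obtain ⟨F, hF, hFs, rfl⟩ := exists_isHomogeneous_of_mem_span_pow y s ha
  obtain ⟨G, hG, hGs, rfl⟩ := exists_isHomogeneous_of_mem_span_pow y s hb
  have hFG := h (m + n) (F * G) (hF.mul hG) (mul_mem hFs hGs) (by rwa [map_mul])
  have hFG0 : map (Ideal.Quotient.mk I) F * map (Ideal.Quotient.mk I) G = 0 := by
    rw [← map_mul]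
    ext c
    simpa only [coeff_map, coeff_zero, Ideal.Quotient.eq_zero_iff_mem] using hFG c
  rcases mul_eq_zero.mp hFG0 with hF0 | hG0
  · exact ha' (eval_mem_of_map_eq_zero hF hFs hF0)
  · exact hb' (eval_mem_of_map_eq_zero hG hGs hG0)

theorem exists_mem_pow_notMem_pow_succ {I : Ideal R} (hI : ⨅ n : ℕ, I ^ n = ⊥) {a : R}
    (ha : a ≠ 0) : ∃ n, a ∈ I ^ n ∧ a ∉ I ^ (n + 1) := by
  by_contra! h
  have hmem : ∀ n, a ∈ I ^ n := fun n => Nat.rec (by simp) (fun n hn => h n hn) n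
  exact ha (by simpa [hI] using Submodule.mem_iInf _ |>.mpr hmem)

theorem IsQuasiRegularOn.noZeroDivisors (h : IsQuasiRegularOn y s)
    (hI : ⨅ n : ℕ, Ideal.span (y '' s) ^ n = ⊥) : NoZeroDivisors R := by
  refine ⟨fun {a b} hab => ?_⟩
  by_contra! hne
  obtain ⟨m, ha, ha'⟩ := exists_mem_pow_notMem_pow_succ hI hne.1
  obtain ⟨n, hb, hb'⟩ := exists_mem_pow_notMem_pow_succ hI hne.2
  exact h.mul_notMem_pow ha ha' hb hb' (hab ▸ zero_mem _)

end QuasiRegular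

section RegularSequence

variable {R : Type*} [CommRing R] {k : ℕ}

theorem ofList_take_ofFn (y : Fin k → R) {j : ℕ} (hj : j ≤ k) :
    Ideal.ofList ((List.ofFn y).take j) = Ideal.span (y '' {i | (i : ℕ) < j}) := by
  rw [← Fin.ofFn_take_eq_take_ofFn hj]
  refine congrArg Ideal.span (Set.ext fun r => ?_)
  simp only [Set.mem_ofPred_eq, List.mem_ofFn, Set.mem_image, Fin.take_apply]
  constructor
  · rintro ⟨i, rfl⟩
    exact ⟨Fin.castLE hj i, i.isLt, rfl⟩
  · rintro ⟨i, hi, rfl⟩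
    exact ⟨⟨i, hi⟩, rfl⟩

theorem IsWeaklyRegular.isQuasiRegularOn (y : Fin k → R)
    (h : IsWeaklyRegular R (List.ofFn y)) : IsQuasiRegularOn y Set.univ := by
  have hprefix : ∀ j ≤ k, IsQuasiRegularOn y {i : Fin k | (i : ℕ) < j} := by
    intro j
    induction j with
    | zero => exact fun _ => by simpa using isQuasiRegularOn_empty
    | succ j ih =>
      intro hj
      have hreg := h.regular_mod_prev j (by simpa using hj)
      rw [Ideal.smul_eq_mul, Ideal.mul_top, ofList_take_ofFn y (Nat.le_of_lt hj)] at hreg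
      have hsucc : {i : Fin k | (i : ℕ) < j + 1} = insert ⟨j, hj⟩ {i : Fin k | (i : ℕ) < j} := by
        ext i
        simp only [Set.mem_ofPred_eq, Set.mem_insert_iff, Fin.ext_iff]
        omega
      rw [hsucc]
      refine (ih (Nat.le_of_lt hj)).insert_of_mul_mem fun r hr => ?_
      exact mem_of_isSMulRegular_quotient_of_smul_mem hreg (by simpa using hr)
  simpa using hprefix k le_rfl

end RegularSequence

theorem isDomain_of_adic_general
    {R : Type*} [CommRing R]
    (kk : ℕ) (y : Fin kk → R)
    (hreg : RingTheory.Sequence.IsRegular R (List.ofFn y))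
    (J : Ideal R) (hJ : J = Ideal.span (Set.range y))
    (hint : (⨅ n : ℕ, J ^ n) = ⊥)
    (hdom : IsDomain (R ⧸ J)) :
    IsDomain R := by
  subst hJ
  rw [← Set.image_univ] at hint hdom
  have : Nontrivial R := (Ideal.Quotient.mk (Ideal.span (y '' Set.univ))).domain_nontrivial
  have := (IsWeaklyRegular.isQuasiRegularOn y hreg.toIsWeaklyRegular).noZeroDivisors hint
  exact NoZeroDivisors.to_isDomain R

/-- let `R` be a commutative ring and `J ⊂ R` a proper ideal
generated by a regular sequence, with `R/J` a domain.  If `R` is graded (by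
`𝒜`) and the intersection `⋂ₙ Jⁿ` is trivial, then `R` itself is a domain. -/
theorem isDomain_of_adic
    {R : Type*} [CommRing R]
    (𝒜 : ℕ → AddSubgroup R) [GradedRing 𝒜]
    (kk : ℕ) (y : Fin kk → R)
    (hreg : RingTheory.Sequence.IsRegular R (List.ofFn y))
    (J : Ideal R) (hJ : J = Ideal.span (Set.range y))
    (hint : (⨅ n : ℕ, J ^ n) = ⊥)
    (hdom : IsDomain (R ⧸ J)) :
    IsDomain R :=
  isDomain_of_adic_general kk y hreg J hJ hint hdom
end

section
/- Let I ⊂ k[x₁,...,x_n] be a homogeneous ideal, u, w two weight vectors lying in the same closed Gröbner cone τ_≺ associated to a monomial order ≺ (i.e., in_≺(in_u(I)) = in_≺(I) = in_≺(in_w(I))). Then the weight quasivaluations on R = k[x]/I satisfy v_u ⊕ v_w = v_{u+w}. -/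
/-!
Splitting a polynomial into its terms gives `F_r(v_{u+w}) ⊆ Σ_{r₁+r₂=r} F_{r₁}(v_u) ∩ F_{r₂}(v_w)`
for every ideal. For the converse, represent a class by its normal form `h` modulo `I`, a
combination of standard monomials. When `u` lies in the Gröbner cone, `h` is a representative of
maximal `u`-weight: if `h` had a term of weight below that of another representative `p`, the
initial form `in_u(h - p)` would consist of terms of `h`, and its leading monomial would lie in
`in_≺(in_u(I)) = in_≺(I)`, which is impossible for a term of `h`. The same `h` serves `u` and `w`,
and monomial weights are additive in the weight vector.
-/

open MvPolynomial
open scoped Classical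

variable {k : Type*} [Field k] {n : ℕ}

/-- The `u`-weight valuation of a polynomial: the minimum of `⟨u, β⟩` over the
exponents `β` in the support (and `⊤` for the zero polynomial). -/
noncomputable def wtVal (u : Fin n → ℚ) (p : MvPolynomial (Fin n) k) : WithTop ℚ :=
  p.support.inf (fun β => ((∑ i, u i * (β i : ℚ) : ℚ) : WithTop ℚ))

lemma le_wtVal_iff (u : Fin n → ℚ) (p : MvPolynomial (Fin n) k) (r : ℚ) :
    (r : WithTop ℚ) ≤ wtVal u p ↔
      ∀ β ∈ p.support, (r : WithTop ℚ) ≤ ((∑ i, u i * (β i : ℚ) : ℚ) : WithTop ℚ) :=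
  Finset.le_inf_iff

/-- The subspace `F̄_r(u) = {p : v̄_u(p) ≥ r}` of the polynomial ring. -/
noncomputable def wtFilt (u : Fin n → ℚ) (r : ℚ) : Submodule k (MvPolynomial (Fin n) k) where
  carrier := {p | (r : WithTop ℚ) ≤ wtVal u p}
  zero_mem' := by simp [wtVal]
  add_mem' := by
    intro a b ha hb
    rw [Set.mem_setOf_eq, le_wtVal_iff]
    intro β hβ
    rcases Finset.mem_union.mp (MvPolynomial.support_add hβ) with h | h
    · exact le_trans ha (Finset.inf_le h)
    · exact le_trans hb (Finset.inf_le h)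
  smul_mem' := by
    intro c p hp
    rw [Set.mem_setOf_eq, le_wtVal_iff]
    intro β hβ
    exact le_trans hp (Finset.inf_le (MvPolynomial.support_smul hβ))

/-- The filtration `F_r(v_u)` of `R = k[x]/I` associated to the weight
quasivaluation `v_u = π_* v̄_u`: its `r`-th piece is the image of
`F̄_r(u)` under the quotient map `π`. -/
noncomputable def wtFiltQuot (I : Ideal (MvPolynomial (Fin n) k)) (u : Fin n → ℚ) (r : ℚ) :
    Submodule k (MvPolynomial (Fin n) k ⧸ I) :=
  Submodule.map (Ideal.Quotient.mkₐ k I).toLinearMap (wtFilt u r)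

/-- The initial form `in_u(f)`: the sum of the terms of `f` of minimal
`u`-weight. -/
noncomputable def initialFormQ (u : Fin n → ℚ) (f : MvPolynomial (Fin n) k) :
    MvPolynomial (Fin n) k :=
  ∑ β ∈ f.support.filter
      (fun β => ∀ γ ∈ f.support, (∑ i, u i * (β i : ℚ)) ≤ ∑ i, u i * (γ i : ℚ)),
    monomial β (coeff β f)

/-- The initial ideal `in_u(I) = ⟨in_u(f) : f ∈ I⟩` of an ideal with respect to
a weight vector `u`. -/
noncomputable def initialIdealQ (u : Fin n → ℚ) (I : Ideal (MvPolynomial (Fin n) k)) :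
    Ideal (MvPolynomial (Fin n) k) :=
  Ideal.span {g | ∃ f ∈ I, f ≠ 0 ∧ g = initialFormQ u f}

/-- The initial (monomial) ideal of `I` with respect to a monomial order `m`:
the ideal generated by the leading monomials of the nonzero elements of `I`. -/
noncomputable def initialIdealOrd (m : MonomialOrder (Fin n))
    (I : Ideal (MvPolynomial (Fin n) k)) : Ideal (MvPolynomial (Fin n) k) :=
  Ideal.span {g | ∃ f ∈ I, f ≠ 0 ∧
    g = monomial (m.toSyn.symm (f.support.sup (fun β => m.toSyn β))) (1 : k)}

def weight (u : Fin n → ℚ) (β : Fin n →₀ ℕ) : ℚ :=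
  ∑ i, u i * (β i : ℚ)

lemma weight_add (u w : Fin n → ℚ) (β : Fin n →₀ ℕ) :
    weight (u + w) β = weight u β + weight w β := by
  simp only [weight, Pi.add_apply, add_mul, Finset.sum_add_distrib]

lemma mem_wtFilt_iff {u : Fin n → ℚ} {r : ℚ} {p : MvPolynomial (Fin n) k} :
    p ∈ wtFilt u r ↔ ∀ β ∈ p.support, r ≤ weight u β :=
  (le_wtVal_iff u p r).trans <| forall₂_congr fun _ _ => WithTop.coe_le_coe

lemma coeff_eq_zero_of_mem_wtFilt {u : Fin n → ℚ} {r : ℚ} {p : MvPolynomial (Fin n) k}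
    (hp : p ∈ wtFilt u r) {β : Fin n →₀ ℕ} (hβ : weight u β < r) : coeff β p = 0 :=
  notMem_support_iff.mp fun hβp => (mem_wtFilt_iff.mp hp β hβp).not_gt hβ

lemma monomial_mem_wtFilt {u : Fin n → ℚ} {r : ℚ} {β : Fin n →₀ ℕ} (hβ : r ≤ weight u β)
    (c : k) : monomial β c ∈ wtFilt u r :=
  mem_wtFilt_iff.mpr fun _ hγ => Finset.mem_singleton.mp (support_monomial_subset hγ) ▸ hβ

lemma wtFilt_inf_le_wtFilt_add (u w : Fin n → ℚ) (r₁ r₂ : ℚ) :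
    wtFilt (k := k) u r₁ ⊓ wtFilt w r₂ ≤ wtFilt (u + w) (r₁ + r₂) := by
  rintro p ⟨hpu, hpw⟩
  refine mem_wtFilt_iff.mpr fun β hβ => ?_
  rw [weight_add]
  exact add_le_add (mem_wtFilt_iff.mp hpu β hβ) (mem_wtFilt_iff.mp hpw β hβ)

lemma wtFilt_add_le_iSup (u w : Fin n → ℚ) (r : ℚ) :
    wtFilt (k := k) (u + w) r ≤
      ⨆ p : {p : ℚ × ℚ // p.1 + p.2 = r}, wtFilt u p.1.1 ⊓ wtFilt w p.1.2 := by
  intro p hp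
  rw [p.as_sum]
  refine Submodule.sum_mem _ fun β hβ => ?_
  have hr : r - weight u β ≤ weight w β := by
    linarith [weight_add u w β ▸ mem_wtFilt_iff.mp hp β hβ]
  exact Submodule.mem_iSup_of_mem ⟨(weight u β, r - weight u β), add_sub_cancel _ _⟩
    ⟨monomial_mem_wtFilt le_rfl _, monomial_mem_wtFilt hr _⟩

lemma wtFiltQuot_add_le_iSup (I : Ideal (MvPolynomial (Fin n) k)) (u w : Fin n → ℚ) (r : ℚ) :
    wtFiltQuot I (u + w) r ≤
      ⨆ p : {p : ℚ × ℚ // p.1 + p.2 = r}, wtFiltQuot I u p.1.1 ⊓ wtFiltQuot I w p.1.2 :=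
  calc wtFiltQuot I (u + w) r
      ≤ (⨆ p : {p : ℚ × ℚ // p.1 + p.2 = r}, wtFilt u p.1.1 ⊓ wtFilt w p.1.2).map
          (Ideal.Quotient.mkₐ k I).toLinearMap := Submodule.map_mono (wtFilt_add_le_iSup u w r)
    _ = ⨆ p : {p : ℚ × ℚ // p.1 + p.2 = r},
          (wtFilt u p.1.1 ⊓ wtFilt w p.1.2).map (Ideal.Quotient.mkₐ k I).toLinearMap :=
      Submodule.map_iSup _ _
    _ ≤ _ := iSup_mono fun _ => Submodule.map_inf_le _

lemma mem_support_initialFormQ {u : Fin n → ℚ} {f : MvPolynomial (Fin n) k}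
    {γ : Fin n →₀ ℕ} :
    γ ∈ (initialFormQ u f).support ↔
      γ ∈ f.support ∧ ∀ δ ∈ f.support, weight u γ ≤ weight u δ := by
  rw [mem_support_iff, initialFormQ, coeff_sum]
  simp_rw [coeff_monomial]
  rw [Finset.sum_ite_eq']
  split_ifs with hγ <;> rw [Finset.mem_filter] at hγ
  · exact iff_of_true (mem_support_iff.mp hγ.1) hγ
  · exact iff_of_false (not_not_intro rfl) hγ

lemma initialFormQ_ne_zero (u : Fin n → ℚ) {f : MvPolynomial (Fin n) k} (hf : f ≠ 0) :
    initialFormQ u f ≠ 0 := by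
  obtain ⟨γ, hγ, hmin⟩ := f.support.exists_min_image (weight u) (support_nonempty.mpr hf)
  exact ne_zero_iff.mpr ⟨γ, mem_support_iff.mp (mem_support_initialFormQ.mpr ⟨hγ, hmin⟩)⟩

lemma monomial_degree_mem_initialIdealOrd (m : MonomialOrder (Fin n))
    {I : Ideal (MvPolynomial (Fin n) k)} {f : MvPolynomial (Fin n) k} (hf : f ∈ I)
    (hf0 : f ≠ 0) : monomial (m.degree f) (1 : k) ∈ initialIdealOrd m I :=
  Ideal.subset_span ⟨f, hf, hf0, rfl⟩

lemma monomial_mem_initialIdealOrd_iff (m : MonomialOrder (Fin n))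
    {I : Ideal (MvPolynomial (Fin n) k)} {α : Fin n →₀ ℕ} :
    monomial α (1 : k) ∈ initialIdealOrd m I ↔ ∃ f ∈ I, f ≠ 0 ∧ m.degree f ≤ α := by
  have hgens : {g | ∃ f ∈ I, f ≠ 0 ∧
        g = monomial (m.toSyn.symm (f.support.sup (fun β => m.toSyn β))) (1 : k)} =
      (fun s => monomial s (1 : k)) '' {s | ∃ f ∈ I, f ≠ 0 ∧ s = m.degree f} := by
    ext g
    constructor
    · rintro ⟨f, hf, hf0, rfl⟩
      exact ⟨m.degree f, ⟨f, hf, hf0, rfl⟩, rfl⟩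
    · rintro ⟨s, ⟨f, hf, hf0, rfl⟩, rfl⟩
      exact ⟨f, hf, hf0, rfl⟩
  rw [initialIdealOrd, hgens, mem_ideal_span_monomial_image, support_monomial,
    if_neg one_ne_zero]
  simp only [Finset.mem_singleton, forall_eq]
  constructor
  · rintro ⟨_, ⟨f, hf, hf0, rfl⟩, hle⟩
    exact ⟨f, hf, hf0, hle⟩
  · rintro ⟨f, hf, hf0, hle⟩
    exact ⟨m.degree f, ⟨f, hf, hf0, rfl⟩, hle⟩

def IsStandard (m : MonomialOrder (Fin n)) (I : Ideal (MvPolynomial (Fin n) k))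
    (h : MvPolynomial (Fin n) k) : Prop :=
  ∀ β ∈ h.support, monomial β (1 : k) ∉ initialIdealOrd m I

lemma exists_sub_mem_isStandard (m : MonomialOrder (Fin n))
    (I : Ideal (MvPolynomial (Fin n) k)) (f : MvPolynomial (Fin n) k) :
    ∃ h, f - h ∈ I ∧ IsStandard m I h := by
  obtain ⟨g, h, hfgh, -, hstd⟩ :=
    m.div_set (B := {b | b ∈ I ∧ b ≠ 0}) (fun b hb => m.isUnit_leadingCoeff.mpr hb.2) f
  refine ⟨h, ?_, fun β hβ hβI => ?_⟩
  · rw [hfgh, add_sub_cancel_right, Finsupp.linearCombination_apply]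
    exact I.sum_mem fun b _ => I.smul_mem _ b.2.1
  · obtain ⟨b, hb, hb0, hle⟩ := (monomial_mem_initialIdealOrd_iff m).mp hβI
    exact hstd β hβ b ⟨hb, hb0⟩ hle

lemma exists_min_weight_mem_initialIdealOrd {m : MonomialOrder (Fin n)}
    {I : Ideal (MvPolynomial (Fin n) k)} {u : Fin n → ℚ}
    (hu : initialIdealOrd m (initialIdealQ u I) = initialIdealOrd m I)
    {f : MvPolynomial (Fin n) k} (hf : f ∈ I) (hf0 : f ≠ 0) :
    ∃ γ ∈ f.support, (∀ δ ∈ f.support, weight u γ ≤ weight u δ) ∧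
      monomial γ (1 : k) ∈ initialIdealOrd m I := by
  have hin0 := initialFormQ_ne_zero u hf0
  have hinI : initialFormQ u f ∈ initialIdealQ u I := Ideal.subset_span ⟨f, hf, hf0, rfl⟩
  obtain ⟨hγ, hmin⟩ := mem_support_initialFormQ.mp ((m.degree_mem_support_iff _).mpr hin0)
  exact ⟨_, hγ, hmin, hu ▸ monomial_degree_mem_initialIdealOrd m hinI hin0⟩

lemma mem_wtFilt_of_sub_mem_of_isStandard {m : MonomialOrder (Fin n)}
    {I : Ideal (MvPolynomial (Fin n) k)} {u : Fin n → ℚ}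
    (hu : initialIdealOrd m (initialIdealQ u I) = initialIdealOrd m I)
    {p h : MvPolynomial (Fin n) k} (hph : p - h ∈ I) (hh : IsStandard m I h) {r : ℚ}
    (hp : p ∈ wtFilt u r) : h ∈ wtFilt u r := by
  by_contra hhr
  obtain ⟨β, hβh, hβr⟩ : ∃ β ∈ h.support, weight u β < r := by
    simpa only [mem_wtFilt_iff, not_forall, not_le, exists_prop] using hhr
  have hcoeff : ∀ γ, weight u γ < r → coeff γ (h - p) = coeff γ h := fun γ hγ => by
    rw [coeff_sub, coeff_eq_zero_of_mem_wtFilt hp hγ, sub_zero]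
  have hβd : β ∈ (h - p).support := by
    rwa [mem_support_iff, hcoeff β hβr, ← mem_support_iff]
  have hd : h - p ∈ I := by simpa only [neg_sub] using I.neg_mem hph
  obtain ⟨γ, hγd, hmin, hγI⟩ :=
    exists_min_weight_mem_initialIdealOrd hu hd (ne_zero_iff.mpr ⟨β, mem_support_iff.mp hβd⟩)
  have hγr : weight u γ < r := (hmin β hβd).trans_lt hβr
  exact hh γ (by rwa [mem_support_iff, ← hcoeff γ hγr, ← mem_support_iff]) hγI

lemma mk_mem_wtFiltQuot_iff {m : MonomialOrder (Fin n)} {I : Ideal (MvPolynomial (Fin n) k)}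
    {u : Fin n → ℚ} (hu : initialIdealOrd m (initialIdealQ u I) = initialIdealOrd m I)
    {h : MvPolynomial (Fin n) k} (hh : IsStandard m I h) {r : ℚ} :
    Ideal.Quotient.mk I h ∈ wtFiltQuot I u r ↔ h ∈ wtFilt u r := by
  refine ⟨fun ⟨p, hp, hph⟩ => ?_, fun hr => ⟨h, hr, rfl⟩⟩
  exact mem_wtFilt_of_sub_mem_of_isStandard hu (Ideal.Quotient.eq.mp hph) hh hp

lemma wtFiltQuot_inf_le_wtFiltQuot_add {m : MonomialOrder (Fin n)}
    {I : Ideal (MvPolynomial (Fin n) k)} {u w : Fin n → ℚ}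
    (hu : initialIdealOrd m (initialIdealQ u I) = initialIdealOrd m I)
    (hw : initialIdealOrd m (initialIdealQ w I) = initialIdealOrd m I) (r₁ r₂ : ℚ) :
    wtFiltQuot I u r₁ ⊓ wtFiltQuot I w r₂ ≤ wtFiltQuot I (u + w) (r₁ + r₂) := by
  rintro x ⟨hxu, hxw⟩
  obtain ⟨f, rfl⟩ := Ideal.Quotient.mk_surjective x
  obtain ⟨h, hfh, hh⟩ := exists_sub_mem_isStandard m I f
  rw [Ideal.Quotient.eq.mpr hfh] at hxu hxw ⊢
  exact ⟨h, wtFilt_inf_le_wtFilt_add u w r₁ r₂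
    ⟨(mk_mem_wtFiltQuot_iff hu hh).mp hxu, (mk_mem_wtFiltQuot_iff hw hh).mp hxw⟩, rfl⟩

theorem weight_quasival_sum_of_same_groebner_cone_general
    (I : Ideal (MvPolynomial (Fin n) k))
    (m : MonomialOrder (Fin n)) (u w : Fin n → ℚ)
    (hu : initialIdealOrd m (initialIdealQ u I) = initialIdealOrd m I)
    (hw : initialIdealOrd m (initialIdealQ w I) = initialIdealOrd m I) :
    ∀ r : ℚ, wtFiltQuot I (u + w) r =
      ⨆ p : {p : ℚ × ℚ // p.1 + p.2 = r}, (wtFiltQuot I u p.1.1 ⊓ wtFiltQuot I w p.1.2) := by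
  intro r
  refine le_antisymm (wtFiltQuot_add_le_iSup I u w r) (iSup_le ?_)
  rintro ⟨⟨r₁, r₂⟩, rfl⟩
  exact wtFiltQuot_inf_le_wtFiltQuot_add hu hw r₁ r₂

/-- let `I` be a homogeneous ideal of `k[x₁,…,x_n]` and `u, w`
two weight vectors lying in the same closed Gröbner cone `τ_≺` of a monomial
order `≺` (i.e. `in_≺(in_u(I)) = in_≺(I) = in_≺(in_w(I))`).  Then the weight
quasivaluations on `R = k[x]/I` satisfy `v_u ⊕ v_w = v_{u+w}`, i.e. the
filtration of `v_{u+w}` is the sum-filtration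
`F_r(v_u ⊕ v_w) = Σ_{r₁+r₂=r} F_{r₁}(v_u) ∩ F_{r₂}(v_w)`. -/
theorem weight_quasival_sum_of_same_groebner_cone
    (I : Ideal (MvPolynomial (Fin n) k))
    (hI : ∀ f ∈ I, ∀ d : ℕ, homogeneousComponent d f ∈ I)
    (m : MonomialOrder (Fin n)) (u w : Fin n → ℚ)
    (hu : initialIdealOrd m (initialIdealQ u I) = initialIdealOrd m I)
    (hw : initialIdealOrd m (initialIdealQ w I) = initialIdealOrd m I) :
    ∀ r : ℚ, wtFiltQuot I (u + w) r =
      ⨆ p : {p : ℚ × ℚ // p.1 + p.2 = r}, (wtFiltQuot I u p.1.1 ⊓ wtFiltQuot I w p.1.2) :=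
  weight_quasival_sum_of_same_groebner_cone_general I m u w hu hw
end

section
/- Let v_u be the weight quasivaluation on R = k[x₁,...,x_n]/I associated to u ∈ ℚⁿ and a homogeneous presentation π: k[x] → R. Then v_u has trivial kernel: v_u(f) = ∞ implies f = 0. -/
open MvPolynomial

variable {k : Type*} [Field k] {n : ℕ}

/-- the weight quasivaluation `v_u` on `R = k[x₁,…,x_n]/I`
(for a homogeneous ideal `I` and `u ∈ ℚⁿ`), defined as the pushforward
`v_u(f) = sup {v̄_u(p) : π(p) = f}`, has trivial kernel: `v_u(f) = ∞` implies
`f = 0`.  Here `v_u(f) = ∞` is rendered as: the values `v̄_u(p)` over the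
representatives `p` of `f` are not bounded above by any rational number. -/
theorem weight_quasivaluation_trivial_kernel
    (I : Ideal (MvPolynomial (Fin n) k))
    (hI : ∀ f ∈ I, ∀ d : ℕ, homogeneousComponent d f ∈ I)
    (u : Fin n → ℚ) (f : MvPolynomial (Fin n) k ⧸ I)
    (h : ∀ q : ℚ, ∃ p : MvPolynomial (Fin n) k,
      Ideal.Quotient.mk I p = f ∧ (q : WithTop ℚ) ≤ wtVal u p) :
    f = 0 := by
  obtain ⟨p₀, hp₀, -⟩ := h 0
  set D : ℕ := p₀.totalDegree with hD
  set B : ℚ := D * ∑ i, |u i| with hB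
  obtain ⟨p, hp, hq⟩ := h (B + 1)
  set p' : MvPolynomial (Fin n) k :=
    ∑ d ∈ Finset.range (D + 1), homogeneousComponent d p with hp'def
  -- p - p₀ ∈ I
  have hmem : p - p₀ ∈ I := by
    rw [← Ideal.Quotient.eq_zero_iff_mem, map_sub, hp, hp₀, sub_self]
  -- p' - p₀ ∈ I
  have hmem' : p' - p₀ ∈ I := by
    have : p' - p₀ = ∑ d ∈ Finset.range (D + 1), homogeneousComponent d (p - p₀) := by
      rw [hp'def]
      conv_lhs => rw [← sum_homogeneousComponent p₀]
      rw [← Finset.sum_sub_distrib]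
      simp [map_sub]
    rw [this]
    exact Ideal.sum_mem _ fun d _ => hI _ hmem d
  have hfp' : Ideal.Quotient.mk I p' = f := by
    rw [← hp₀, Ideal.Quotient.eq]
    exact hmem'
  -- show p' = 0
  have hzero : p' = 0 := by
    by_contra hne
    obtain ⟨β, hβ⟩ := Finset.nonempty_of_ne_empty (fun hs => hne (support_eq_empty.mp hs))
    have hcoeff : coeff β p' ≠ 0 := mem_support_iff.mp hβ
    have hcoeff₂ : coeff β p' = if β.degree ≤ D then coeff β p else 0 := by
      rw [hp'def, coeff_sum]
      simp_rw [coeff_homogeneousComponent]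
      rcases le_or_gt β.degree D with hle | hlt
      · rw [if_pos hle, Finset.sum_ite_eq, if_pos]
        simpa using Nat.lt_succ_of_le hle
      · rw [if_neg (not_le.mpr hlt), Finset.sum_eq_zero]
        intro d hd
        have hd' := Finset.mem_range.mp hd
        rw [if_neg]
        omega
    rw [hcoeff₂] at hcoeff
    have hdeg : β.degree ≤ D := by
      by_contra hc; rw [if_neg hc] at hcoeff; exact hcoeff rfl
    rw [if_pos hdeg] at hcoeff
    have hβp : β ∈ p.support := mem_support_iff.mpr hcoeff
    have hle : wtVal u p ≤ ((∑ i, u i * (β i : ℚ) : ℚ) : WithTop ℚ) := Finset.inf_le hβp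
    have h1 : ((B + 1 : ℚ) : WithTop ℚ) ≤ ((∑ i, u i * (β i : ℚ) : ℚ) : WithTop ℚ) :=
      le_trans hq hle
    have h2 : B + 1 ≤ ∑ i, u i * (β i : ℚ) := WithTop.coe_le_coe.mp h1
    have h3 : ∑ i, u i * (β i : ℚ) ≤ B := by
      have hβi : ∀ i, (β i : ℚ) ≤ (D : ℚ) := by
        intro i
        have : β i ≤ β.degree := by
          rcases eq_or_ne (β i) 0 with h0 | h0
          · simp [h0]
          · exact Finsupp.le_degree i β
        exact_mod_cast le_trans this hdeg
      calc ∑ i, u i * (β i : ℚ) ≤ ∑ i, |u i| * (D : ℚ) := by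
            apply Finset.sum_le_sum
            intro i _
            calc u i * (β i : ℚ) ≤ |u i| * (β i : ℚ) := by
                  apply mul_le_mul_of_nonneg_right (le_abs_self _)
                  positivity
              _ ≤ |u i| * (D : ℚ) := by
                  apply mul_le_mul_of_nonneg_left (hβi i) (abs_nonneg _)
        _ = B := by rw [hB, ← Finset.sum_mul, mul_comm]
    linarith
  rw [← hfp', hzero, map_zero]
end
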